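/- arXiv:2405.08319 — 3 statements merged into one kernel-verified Lean document; each statement's English description precedes it below -/
import Mathlib

section
/- Let G = (V, E) be a finite graph with flow (f, <) for (G, I, O). Then distinct f-orbits do not merge: if i, j ∈ V \ O with i ≠ j, then f(i) ≠ f(j). -/
/-- Distinct `f`-orbits do not merge: the flow function takes distinct values on distinct
non-output vertices. -/
theorem flow_paths_do_not_merge {V : Type*} [Fintype V] [PartialOrder V]
    (G : SimpleGraph V) (I O : Set V) (f : V → V)
    (hf_range : ∀ i ∉ O, f i ∉ I)
    (hadj : ∀ i ∉ O, G.Adj i (f i))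
    (hlt : ∀ i ∉ O, i < f i)
    (hnbr : ∀ i ∉ O, ∀ j, G.Adj (f i) j → j ≠ i → i < j) :
    ∀ i ∉ O, ∀ j ∉ O, i ≠ j → f i ≠ f j := by
  intro i hi j hj hij heq
  have h1 : i < j := hnbr i hi j (heq ▸ (hadj j hj).symm) (Ne.symm hij)
  have h2 : j < i := hnbr j hj i (heq ▸ (hadj i hi).symm) hij
  exact absurd h2 (lt_asymm h1)
end

section
/- Let G = (V, E) be a finite graph with flow (f, <) for (G, I, O). Then every f-path is an induced path: if i ∈ V \ O, k ≥ 2, and all iterates f(i), f²(i), …, f^k(i) are defined, then i and f^k(i) are not adjacent in G for k ≥ 2. -/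
/-- Every `f`-path is an induced path: a vertex is not adjacent to its `k`-th iterate for
`k ≥ 2` (as long as the iterates are defined, i.e. intermediate vertices are not outputs). -/
theorem flow_path_induced {V : Type*} [Fintype V] [PartialOrder V]
    (G : SimpleGraph V) (I O : Set V) (f : V → V)
    (hf_range : ∀ i ∉ O, f i ∉ I)
    (hadj : ∀ i ∉ O, G.Adj i (f i))
    (hlt : ∀ i ∉ O, i < f i)
    (hnbr : ∀ i ∉ O, ∀ j, G.Adj (f i) j → j ≠ i → i < j) :
    ∀ i ∉ O, ∀ k : ℕ, 2 ≤ k → (∀ m < k, f^[m] i ∉ O) →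
      ¬ G.Adj i (f^[k] i) := by
  intro i hi k hk hO hadj'
  -- chain: i < f^[n] i for 1 ≤ n ≤ k-1
  have chain : ∀ n : ℕ, 1 ≤ n → n < k → i < f^[n] i := by
    intro n h1 hn
    induction n with
    | zero => omega
    | succ m ih =>
      rcases Nat.eq_or_lt_of_le h1 with h | h
      · simpa [← h] using hlt i hi
      · have hm1 : 1 ≤ m := by omega
        have := ih hm1 (by omega)
        have hstep : f^[m] i < f^[m + 1] i := by
          rw [Function.iterate_succ_apply']
          exact hlt _ (hO m (by omega))
        exact lt_trans this hstep
  have hlt1 : i < f^[k - 1] i := chain (k - 1) (by omega) (by omega)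
  have hOk : f^[k - 1] i ∉ O := hO (k - 1) (by omega)
  have hkeq : f^[k] i = f (f^[k - 1] i) := by
    conv_lhs => rw [show k = (k - 1) + 1 by omega, Function.iterate_succ_apply']
  have hadj2 : G.Adj (f (f^[k - 1] i)) i := by rw [← hkeq]; exact hadj'.symm
  have := hnbr _ hOk i hadj2 hlt1.ne
  exact absurd (lt_trans hlt1 this) (lt_irrefl i)
end

section
/- Let σ : ℝ → ℝ be a non-constant function. Suppose there exists an affine map f(x) = wx + b (w, b ∈ ℝ) with f : σ(ℝ) → ℝ such that σ(f(x)) = x for all x ∈ σ(ℝ). Then there exists a subset Ω ⊆ ℝ on which σ restricted to Ω is a non-constant affine function with σ(Ω) = σ(ℝ). Moreover w ≠ 0. -/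
/-- If a non-constant activation `σ` admits an affine right-inverse on its range, then `σ`
is ReLU-like: affine and non-constant on some `Ω` with `σ(Ω) = σ(ℝ)`; moreover `w ≠ 0`. -/
theorem affine_right_inverse_implies_ReLU_like (σ : ℝ → ℝ)
    (hnc : ∃ x y : ℝ, σ x ≠ σ y)
    (w b : ℝ) (hinv : ∀ x ∈ Set.range σ, σ (w * x + b) = x) :
    w ≠ 0 ∧
    ∃ Ω : Set ℝ, (∃ v c : ℝ, v ≠ 0 ∧ ∀ x ∈ Ω, σ x = v * x + c) ∧
      σ '' Ω = Set.range σ := by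
  obtain ⟨x₀, y₀, hxy⟩ := hnc
  have hw : w ≠ 0 := by
    intro hw0
    apply hxy
    have h1 := hinv (σ x₀) ⟨x₀, rfl⟩
    have h2 := hinv (σ y₀) ⟨y₀, rfl⟩
    rw [hw0] at h1 h2
    simp at h1 h2
    rw [← h1, ← h2]
  refine ⟨hw, (fun t => w * t + b) '' Set.range σ, ⟨w⁻¹, -b/w, inv_ne_zero hw, ?_⟩, ?_⟩
  · rintro t ⟨x, hx, rfl⟩
    rw [hinv x hx]
    field_simp
    ring
  · ext y
    constructor
    · rintro ⟨t, ⟨x, hx, rfl⟩, rfl⟩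
      rw [hinv x hx]; exact hx
    · rintro hy
      exact ⟨w * y + b, ⟨y, hy, rfl⟩, hinv y hy⟩
end
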